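/- arXiv:2306.17579 — 2 statements merged into one kernel-verified Lean document; each statement's English description precedes it below -/
import Mathlib

section
/- Let L be the Lyapunov operator L(X) = AX + XAᵀ + Σ_{i,j=1}^d k_{ij} N_i X N_jᵀ on symmetric n×n matrices, with K = (k_{ij}) positive semidefinite. If V1, V2 are positive semidefinite symmetric matrices with ⟨V1, V2⟩_F = 0, then ⟨L(V1), V2⟩_F ≥ 0. -/
/-!
Orthogonal positive semidefinite matrices annihilate each other: writing `V₁ = XᴴX`, `V₂ = YᴴY`,
`tr (V₁V₂) = ‖XYᴴ‖²_F`, so `V₁V₂ = 0`. Hence the drift part `AV₁ + V₁Aᵀ` is orthogonal to `V₂`,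
and what remains is `tr (S V₂)` with `S = ∑ k_ij N_i V₁ N_jᵀ = M (K ⊗ V₁) Mᵀ` for the block row
`M = [N₁ ⋯ N_d]`. So `S` is positive semidefinite, and the trace of a product of two positive
semidefinite matrices is nonnegative.
-/

open Matrix

open scoped MatrixOrder ComplexOrder Kronecker

namespace Matrix

variable {𝕜 m n ι : Type*} [RCLike 𝕜] [Fintype n]

lemma PosSemidef.trace_mul_nonneg {A B : Matrix n n 𝕜} (hA : A.PosSemidef) (hB : B.PosSemidef) :
    0 ≤ (A * B).trace := by
  classical
  obtain ⟨Y, rfl⟩ := CStarAlgebra.nonneg_iff_eq_star_mul_self.mp hB.nonneg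
  rw [star_eq_conjTranspose, ← Matrix.mul_assoc, trace_mul_cycle]
  exact (hA.mul_mul_conjTranspose_same Y).trace_nonneg

lemma PosSemidef.mul_eq_zero_of_trace_mul_eq_zero {A B : Matrix n n 𝕜} (hA : A.PosSemidef)
    (hB : B.PosSemidef) (h : (A * B).trace = 0) : A * B = 0 := by
  classical
  obtain ⟨X, rfl⟩ := CStarAlgebra.nonneg_iff_eq_star_mul_self.mp hA.nonneg
  obtain ⟨Y, rfl⟩ := CStarAlgebra.nonneg_iff_eq_star_mul_self.mp hB.nonneg
  simp only [star_eq_conjTranspose] at h ⊢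
  have hXY : X * Yᴴ = 0 := by
    rw [← trace_mul_conjTranspose_self_eq_zero_iff, ← h, conjTranspose_mul,
      conjTranspose_conjTranspose, trace_mul_cycle']
    simp only [Matrix.mul_assoc]
  rw [Matrix.mul_assoc, ← Matrix.mul_assoc X, hXY, Matrix.zero_mul, Matrix.mul_zero]

def blockRow (N : ι → Matrix m n 𝕜) : Matrix m (ι × n) 𝕜 :=
  of fun x ip => N ip.1 x ip.2

lemma sum_smul_mul_mul_conjTranspose_eq_blockRow_mul_kronecker [Fintype ι]
    (K : Matrix ι ι 𝕜) (V : Matrix n n 𝕜) (N : ι → Matrix m n 𝕜) :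
    ∑ i, ∑ j, K i j • (N i * V * (N j)ᴴ) = blockRow N * (K ⊗ₖ V) * (blockRow N)ᴴ := by
  ext x y
  simp only [blockRow, sum_apply, smul_apply, mul_apply, conjTranspose_apply, RCLike.star_def,
    Finset.sum_mul, smul_eq_mul, Finset.mul_sum, of_apply, kroneckerMap_apply,
    Fintype.sum_prod_type]
  rw [Finset.sum_comm]
  refine Finset.sum_congr rfl fun j _ => ?_
  rw [Finset.sum_comm]
  refine Finset.sum_congr rfl fun q _ => Finset.sum_congr rfl fun i _ =>
    Finset.sum_congr rfl fun p _ => ?_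
  ring

lemma PosSemidef.sum_smul_mul_mul_conjTranspose [Fintype m] [Fintype ι] {K : Matrix ι ι 𝕜}
    (hK : K.PosSemidef) {V : Matrix n n 𝕜} (hV : V.PosSemidef) (N : ι → Matrix m n 𝕜) :
    (∑ i, ∑ j, K i j • (N i * V * (N j)ᴴ)).PosSemidef := by
  rw [sum_smul_mul_mul_conjTranspose_eq_blockRow_mul_kronecker]
  exact (hK.kronecker hV).mul_mul_conjTranspose_same _

lemma IsSymm.trace_transpose_mul {R : Type*} [CommSemiring R] {B : Matrix n n R}
    (hB : B.IsSymm) (A : Matrix n n R) : (Aᵀ * B).trace = (A * B).trace := by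
  rw [← trace_transpose, transpose_mul, transpose_transpose, hB.eq, trace_mul_comm]

end Matrix

theorem stmt_3 (n d : ℕ) (A : Matrix (Fin n) (Fin n) ℝ)
    (N : Fin d → Matrix (Fin n) (Fin n) ℝ)
    (K : Matrix (Fin d) (Fin d) ℝ) (hK : K.PosSemidef)
    (V1 V2 : Matrix (Fin n) (Fin n) ℝ)
    (hV1 : V1.PosSemidef) (hV2 : V2.PosSemidef)
    (horth : (V1ᵀ * V2).trace = 0) :
    0 ≤ ((A * V1 + V1 * Aᵀ + ∑ i : Fin d, ∑ j : Fin d, K i j • (N i * V1 * (N j)ᵀ))ᵀ * V2).trace := by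
  have hV1symm : V1.IsSymm := isHermitian_iff_isSymm.mp hV1.isHermitian
  have hV2symm : V2.IsSymm := isHermitian_iff_isSymm.mp hV2.isHermitian
  have hV12 : V1 * V2 = 0 :=
    hV1.mul_eq_zero_of_trace_mul_eq_zero hV2 (by rwa [hV1symm.eq] at horth)
  have hV21 : V2 * V1 = 0 := by
    simpa only [transpose_mul, hV1symm.eq, hV2symm.eq, transpose_zero] using
      congrArg transpose hV12
  have hS : (∑ i, ∑ j, K i j • (N i * V1 * (N j)ᵀ)).PosSemidef := by
    simpa only [conjTranspose_eq_transpose_of_trivial] using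
      hK.sum_smul_mul_mul_conjTranspose hV1 N
  rw [hV2symm.trace_transpose_mul, Matrix.add_mul, Matrix.add_mul, trace_add, trace_add,
    Matrix.mul_assoc, hV12, trace_mul_cycle, hV21, Matrix.mul_zero, Matrix.zero_mul, trace_zero,
    zero_add, zero_add]
  exact hS.trace_mul_nonneg hV2
end

section
/- Let L : Sym(n,ℝ) → Sym(n,ℝ) be a linear operator on symmetric matrices. Suppose there exists α₀ ∈ ℝ such that for all α > α₀ the operator (αI − L)⁻¹ exists and maps positive semidefinite matrices to positive semidefinite matrices. Then for all positive semidefinite V1, V2 with ⟨V1, V2⟩_F = 0, we have ⟨L(V1), V2⟩_F ≥ 0. -/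
/-!
For large `α` let `X_α := (αI - L)⁻¹ V1`, which is positive semidefinite. Since
`L (α X_α) = α (α X_α - V1)` and `⟨V1, V2⟩ = 0`, we get `⟨L (α X_α), V2⟩ = α² ⟨X_α, V2⟩ ≥ 0`.
From `α X_α - L X_α = V1` one gets `‖X_α‖ ≤ ‖V1‖ / (α - ‖L‖)`, so `α X_α = V1 + L X_α → V1`,
and the inequality passes to the limit.
-/

open Matrix Filter Topology
open scoped ComplexOrder

theorem Matrix.PosSemidef.trace_mul_nonneg_s16 {m 𝕜 : Type*} [Fintype m] [RCLike 𝕜]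
    {A B : Matrix m m 𝕜} (hA : A.PosSemidef) (hB : B.PosSemidef) : 0 ≤ (A * B).trace := by
  classical
  obtain ⟨C, rfl⟩ : ∃ C : Matrix m m 𝕜, B = Cᴴ * C := by
    open scoped MatrixOrder in exact CStarAlgebra.nonneg_iff_eq_star_mul_self.mp hB.nonneg
  rw [← Matrix.mul_assoc, trace_mul_cycle]
  exact (hA.mul_mul_conjTranspose_same C).trace_nonneg

theorem tendsto_smul_atTop_of_smul_sub_eq {E : Type*} [NormedAddCommGroup E] [NormedSpace ℝ E]
    (L : E →L[ℝ] E) {v : E} {x : ℝ → E} (hx : ∀ᶠ α in atTop, α • x α - L (x α) = v) :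
    Tendsto (fun α => α • x α) atTop (𝓝 v) := by
  have hbound : ∀ᶠ α in atTop, ‖x α‖ ≤ ‖v‖ / (α - ‖L‖) := by
    filter_upwards [hx, eventually_gt_atTop (‖L‖)] with α hα hαL
    rw [le_div_iff₀ (sub_pos.mpr hαL)]
    have hαx : α * ‖x α‖ ≤ ‖v‖ + ‖L‖ * ‖x α‖ := by
      calc α * ‖x α‖ = ‖v + L (x α)‖ := by
            rw [← hα, sub_add_cancel, norm_smul, Real.norm_of_nonneg (by linarith [norm_nonneg L])]
        _ ≤ ‖v‖ + ‖L‖ * ‖x α‖ := (norm_add_le _ _).trans (by gcongr; exact L.le_opNorm _)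
    linarith
  have hx0 : Tendsto x atTop (𝓝 0) := by
    refine squeeze_zero_norm' hbound ?_
    exact tendsto_const_nhds.div_atTop (tendsto_atTop_add_const_right _ _ tendsto_id)
  have hLx : Tendsto (fun α => v + L (x α)) atTop (𝓝 v) := by
    simpa using tendsto_const_nhds.add ((L.continuous.tendsto 0).comp hx0)
  refine hLx.congr' ?_
  filter_upwards [hx] with α hα
  rw [← hα, sub_add_cancel]

attribute [local instance] Matrix.normedAddCommGroup Matrix.normedSpace

theorem stmt_16_general (n : ℕ)
    (L : Matrix (Fin n) (Fin n) ℝ →ₗ[ℝ] Matrix (Fin n) (Fin n) ℝ)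
    (hres : ∃ α₀ : ℝ, ∀ α > α₀,
      (∀ Y : Matrix (Fin n) (Fin n) ℝ, Y.IsSymm → ∃ X, X.IsSymm ∧ α • X - L X = Y) ∧
      (∀ X : Matrix (Fin n) (Fin n) ℝ, X.IsSymm → (α • X - L X).PosSemidef → X.PosSemidef))
    (V1 V2 : Matrix (Fin n) (Fin n) ℝ)
    (hV1 : V1.PosSemidef) (hV2 : V2.PosSemidef)
    (horth : (V1 * V2).trace = 0) :
    0 ≤ (L V1 * V2).trace := by
  obtain ⟨α₀, hres⟩ := hres
  choose! X hXsymm hXeq using fun α (hα : α > α₀) ↦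
    (hres α hα).1 V1 (isHermitian_iff_isSymm.mp hV1.isHermitian)
  have hXpsd : ∀ α > α₀, (X α).PosSemidef := fun α hα ↦
    (hres α hα).2 _ (hXsymm α hα) (hXeq α hα ▸ hV1)
  have hpos : ∀ α > max α₀ 0, 0 ≤ (L (α • X α) * V2).trace := fun α hα ↦ by
    have hα₀ : α > α₀ := lt_of_le_of_lt (le_max_left _ _) hα
    have hLX : L (X α) = α • X α - V1 := by rw [← hXeq α hα₀, sub_sub_cancel]
    rw [map_smul, hLX, smul_mul, sub_mul, trace_smul, trace_sub, smul_mul, trace_smul, horth,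
      sub_zero, smul_eq_mul, smul_eq_mul, ← mul_assoc]
    exact mul_nonneg (mul_self_nonneg α) ((hXpsd α hα₀).trace_mul_nonneg_s16 hV2)
  have hlim : Tendsto (fun α ↦ α • X α) atTop (𝓝 V1) :=
    tendsto_smul_atTop_of_smul_sub_eq (LinearMap.toContinuousLinearMap L)
      (eventually_gt_atTop α₀ |>.mono hXeq)
  have hcont : Continuous fun M ↦ (L M * V2).trace :=
    LinearMap.continuous_of_finiteDimensional
      ((traceLinearMap (Fin n) ℝ ℝ) ∘ₗ (LinearMap.mulRight ℝ V2) ∘ₗ L)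
  exact ge_of_tendsto ((hcont.tendsto V1).comp hlim) (eventually_gt_atTop _ |>.mono hpos)

theorem stmt_16 (n : ℕ)
    (L : Matrix (Fin n) (Fin n) ℝ →ₗ[ℝ] Matrix (Fin n) (Fin n) ℝ)
    (hLsymm : ∀ X : Matrix (Fin n) (Fin n) ℝ, X.IsSymm → (L X).IsSymm)
    (hres : ∃ α₀ : ℝ, ∀ α > α₀,
      (∀ Y : Matrix (Fin n) (Fin n) ℝ, Y.IsSymm → ∃ X, X.IsSymm ∧ α • X - L X = Y) ∧
      (∀ X : Matrix (Fin n) (Fin n) ℝ, X.IsSymm → (α • X - L X).PosSemidef → X.PosSemidef))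
    (V1 V2 : Matrix (Fin n) (Fin n) ℝ)
    (hV1 : V1.PosSemidef) (hV2 : V2.PosSemidef)
    (horth : (V1 * V2).trace = 0) :
    0 ≤ (L V1 * V2).trace :=
  stmt_16_general n L hres V1 V2 hV1 hV2 horth
end
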